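/- Discrete Morrey inequality: Let d ≥ 1 and let p be a real number with p > d. Then there exists a constant C = C(d,p) such that for every integer n ≥ 1, every f : ℤ^d → ℝ and all x, y ∈ B_n: |f(x) − f(y)| ≤ C·n^{1−d/p}·‖∇f‖_p. -/

import Mathlib

/-- Points of the lattice `ℤ^d`. -/
abbrev LatticePt (d : ℕ) := Fin d → ℤ

/-- The cube `B_n = [0,n]^d ∩ ℤ^d`. -/
noncomputable def cube (d n : ℕ) : Finset (LatticePt d) :=
  Fintype.piFinset fun _ => Finset.Icc (0 : ℤ) (n : ℤ)

/-- `|∇f(x)| = (Σᵢ (f(x+eᵢ) − f(x))²)^{1/2}`. -/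
noncomputable def gradLen {d : ℕ} (f : LatticePt d → ℝ) (x : LatticePt d) : ℝ :=
  Real.sqrt (∑ i, (f (x + Pi.single i 1) - f x) ^ 2)

/-- `‖∇f‖_p = (Σ_{x ∈ B_n} |∇f(x)|^p)^{1/p}`. -/
noncomputable def lpGradNorm (d n : ℕ) (p : ℝ) (f : LatticePt d → ℝ) : ℝ :=
  (∑ x ∈ cube d n, gradLen f x ^ p) ^ (1 / p)

/-!
Joining two points of a cube `Q` of side `m` by the lattice path that corrects one coordinate at a
time and averaging over all pairs gives a discrete Poincaré inequality; with Hölder it bounds the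
mean oscillation of `f` on `Q` by `d ‖∇f‖_p (m + 1) ^ (1 - d / p)`. As `1 - d / p > 0`, the
averages of `f` over the nested cubes of halving side around a point `x` converge to `f x` at a
geometric rate, so `f x` is within `C ‖∇f‖_p n ^ (1 - d / p)` of the average of `f` over `B_n`.
-/

open Finset Function
open scoped BigOperators

section Cubes

variable {d : ℕ}

noncomputable def subcube (c : LatticePt d) (m : ℕ) : Finset (LatticePt d) :=
  Fintype.piFinset fun i => Icc (c i) (c i + m)

lemma mem_subcube {c x : LatticePt d} {m : ℕ} :
    x ∈ subcube c m ↔ ∀ i, c i ≤ x i ∧ x i ≤ c i + m := by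
  simp [subcube]

lemma card_subcube (c : LatticePt d) (m : ℕ) : #(subcube c m) = (m + 1) ^ d := by
  simp [subcube, Fintype.card_piFinset, add_sub_right_comm]

lemma cube_eq_subcube_zero (n : ℕ) : cube d n = subcube 0 n := by
  simp [cube, subcube]

lemma subcube_zero (c : LatticePt d) : subcube c 0 = {c} := by
  ext x
  simp only [mem_subcube, mem_singleton, funext_iff, Nat.cast_zero, add_zero]
  exact forall_congr' fun i => le_antisymm_iff.symm.trans eq_comm

lemma subcube_subset_subcube {c c' : LatticePt d} {m m' : ℕ}
    (h : ∀ i, c i ≤ c' i ∧ c' i + m' ≤ c i + m) : subcube c' m' ⊆ subcube c m :=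
  Fintype.piFinset_subset _ _ fun i => Icc_subset_Icc (h i).1 (h i).2

lemma exists_subcube_half_mem {c x : LatticePt d} {m : ℕ} (hx : x ∈ subcube c m) :
    ∃ c', subcube c' (m / 2) ⊆ subcube c m ∧ x ∈ subcube c' (m / 2) := by
  rw [mem_subcube] at hx
  refine ⟨fun i => min (x i) (c i + m - (m / 2 : ℕ)), subcube_subset_subcube fun i => ?_,
    mem_subcube.2 fun i => ?_⟩ <;>
  · have := hx i
    have : ((m / 2 : ℕ) : ℤ) ≤ m := by exact_mod_cast Nat.div_le_self m 2
    omega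

lemma abs_sub_le_gradLen (f : LatticePt d → ℝ) (x : LatticePt d) (i : Fin d) :
    |f (x + Pi.single i 1) - f x| ≤ gradLen f x := by
  rw [gradLen, ← Real.sqrt_sq_eq_abs]
  exact Real.sqrt_le_sqrt <| single_le_sum (f := fun j => (f (x + Pi.single j 1) - f x) ^ 2)
    (fun j _ => sq_nonneg _) (mem_univ i)

lemma gradLen_nonneg (f : LatticePt d → ℝ) (x : LatticePt d) : 0 ≤ gradLen f x :=
  Real.sqrt_nonneg _

lemma update_add_single {ι M : Type*} [DecidableEq ι] [AddZeroClass M] (u : ι → M) (i : ι)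
    (r s : M) : update u i r + Pi.single i s = update u i (r + s) := by
  ext j; rcases eq_or_ne j i with rfl | hj <;> simp [*]

lemma abs_sub_update_le_sum_Ico (f : LatticePt d → ℝ) (u : LatticePt d) (i : Fin d) {s t : ℤ}
    (hst : s ≤ t) :
    |f (update u i s) - f (update u i t)| ≤ ∑ r ∈ Ico s t, gradLen f (update u i r) := by
  induction t, hst using Int.leInduction with
  | base => simp
  | succ t hst ih =>
    have hstep : |f (update u i t) - f (update u i (t + 1))| ≤ gradLen f (update u i t) := by
      rw [abs_sub_comm, ← update_add_single]
      exact abs_sub_le_gradLen f _ i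
    rw [← insert_Ico_right_eq_Ico_add_one hst, sum_insert right_notMem_Ico]
    linarith [abs_sub_le (f (update u i s)) (f (update u i t)) (f (update u i (t + 1)))]

lemma abs_sub_update_le_sum_Icc (f : LatticePt d → ℝ) (u : LatticePt d) (i : Fin d) {a b s t : ℤ}
    (hs : s ∈ Icc a b) (ht : t ∈ Icc a b) :
    |f (update u i s) - f (update u i t)| ≤ ∑ r ∈ Icc a b, gradLen f (update u i r) := by
  wlog hst : s ≤ t generalizing s t
  · rw [abs_sub_comm]; exact this ht hs (le_of_not_ge hst)
  refine (abs_sub_update_le_sum_Ico f u i hst).trans <|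
    sum_le_sum_of_subset_of_nonneg (fun r hr => ?_) fun r _ _ => gradLen_nonneg f _
  simp only [mem_Icc, mem_Ico] at hs ht hr ⊢
  omega

section Hybrid

variable {α : Type*}

def hybrid (k : ℕ) (a b : Fin d → α) : Fin d → α :=
  fun j => if (j : ℕ) < k then b j else a j

@[simp] lemma hybrid_zero (a b : Fin d → α) : hybrid 0 a b = a := by
  ext j; simp [hybrid]

@[simp] lemma hybrid_dim (a b : Fin d → α) : hybrid d a b = b := by
  ext j; simp [hybrid]

@[simp] lemma hybrid_apply_self (i : Fin d) (a b : Fin d → α) : hybrid i a b i = a i := by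
  simp [hybrid]

lemma hybrid_succ [DecidableEq α] (i : Fin d) (a b : Fin d → α) :
    hybrid ((i : ℕ) + 1) a b = update (hybrid i a b) i (b i) := by
  ext j
  rcases eq_or_ne j i with rfl | hj
  · simp [hybrid]
  · simp [hybrid, hj, le_iff_lt_or_eq, Fin.val_ne_of_ne hj]

lemma hybrid_hybrid (k : ℕ) (a b : Fin d → α) : hybrid k (hybrid k a b) (hybrid k b a) = a := by
  ext j; by_cases h : (j : ℕ) < k <;> simp [hybrid, h]

lemma hybrid_mem_piFinset {t : ∀ _ : Fin d, Finset α} {a b : Fin d → α}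
    (ha : a ∈ Fintype.piFinset t) (hb : b ∈ Fintype.piFinset t) (k : ℕ) :
    hybrid k a b ∈ Fintype.piFinset t := by
  rw [Fintype.mem_piFinset] at *
  intro j
  by_cases h : (j : ℕ) < k <;> simp [hybrid, h, ha j, hb j]

lemma abs_sub_le_sum_abs_sub_hybrid (f : (Fin d → α) → ℝ) (a b : Fin d → α) :
    |f a - f b| ≤ ∑ i : Fin d, |f (hybrid i a b) - f (hybrid ((i : ℕ) + 1) a b)| := by
  rw [Fin.sum_univ_eq_sum_range (fun k => |f (hybrid k a b) - f (hybrid (k + 1) a b)|)]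
  calc |f a - f b| = |∑ k ∈ range d, (f (hybrid k a b) - f (hybrid (k + 1) a b))| := by
        rw [sum_range_sub', hybrid_zero, hybrid_dim]
    _ ≤ _ := abs_sum_le_sum_abs _ _

variable {M : Type*} [AddCommMonoid M] {t : ∀ _ : Fin d, Finset α}

/-- `(a, b) ↦ (hybrid k a b, hybrid k b a)` is an involution of `Q ×ˢ Q` for a box `Q`. -/
lemma sum_sum_hybrid (k : ℕ) (Φ : (Fin d → α) → M) :
    ∑ a ∈ Fintype.piFinset t, ∑ b ∈ Fintype.piFinset t, Φ (hybrid k a b) =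
      #(Fintype.piFinset t) • ∑ a ∈ Fintype.piFinset t, Φ a := by
  set Q := Fintype.piFinset t
  have swap : ∀ x ∈ Q ×ˢ Q, (hybrid k x.1 x.2, hybrid k x.2 x.1) ∈ Q ×ˢ Q := fun x hx => by
    rw [mem_product] at hx ⊢
    exact ⟨hybrid_mem_piFinset hx.1 hx.2 k, hybrid_mem_piFinset hx.2 hx.1 k⟩
  have swap_swap : ∀ x : (Fin d → α) × (Fin d → α),
      (hybrid k (hybrid k x.1 x.2) (hybrid k x.2 x.1),
        hybrid k (hybrid k x.2 x.1) (hybrid k x.1 x.2)) = x :=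
    fun x => Prod.ext (hybrid_hybrid k _ _) (hybrid_hybrid k _ _)
  rw [← sum_product', sum_nbij' (g := fun y => Φ y.1) _ _ swap swap (fun x _ => swap_swap x)
    (fun x _ => swap_swap x) fun _ _ => rfl, sum_product]
  simp [smul_sum]

lemma sum_sum_update [DecidableEq α] (i : Fin d) (Φ : (Fin d → α) → M) :
    ∑ u ∈ Fintype.piFinset t, ∑ r ∈ t i, Φ (update u i r) =
      #(t i) • ∑ u ∈ Fintype.piFinset t, Φ u := by
  set Q := Fintype.piFinset t
  have swap : ∀ x ∈ Q ×ˢ t i, (update x.1 i x.2, x.1 i) ∈ Q ×ˢ t i := fun x hx => by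
    rw [mem_product, Fintype.mem_piFinset] at hx ⊢
    refine ⟨fun j => ?_, hx.1 i⟩
    rcases eq_or_ne j i with rfl | hj
    · simpa using hx.2
    · simpa [hj] using hx.1 j
  have swap_swap : ∀ x : (Fin d → α) × α, (update (update x.1 i x.2) i (x.1 i),
      update x.1 i x.2 i) = x := fun x => by simp
  rw [← sum_product', sum_nbij' (g := fun y => Φ y.1) _ _ swap swap (fun x _ => swap_swap x)
    (fun x _ => swap_swap x) fun _ _ => rfl, sum_product]
  simp [smul_sum]

end Hybrid

lemma abs_sub_hybrid_succ_le (f : LatticePt d → ℝ) {c a b : LatticePt d} {m : ℕ}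
    (ha : a ∈ subcube c m) (hb : b ∈ subcube c m) (i : Fin d) :
    |f (hybrid i a b) - f (hybrid ((i : ℕ) + 1) a b)| ≤
      ∑ r ∈ Icc (c i) (c i + m), gradLen f (update (hybrid i a b) i r) := by
  have h := abs_sub_update_le_sum_Icc f (hybrid i a b) i (mem_Icc.2 (mem_subcube.1 ha i))
    (mem_Icc.2 (mem_subcube.1 hb i))
  rwa [← hybrid_succ, ← hybrid_apply_self i a b, update_eq_self] at h

theorem sum_sum_abs_sub_le (f : LatticePt d → ℝ) (c : LatticePt d) (m : ℕ) :
    ∑ a ∈ subcube c m, ∑ b ∈ subcube c m, |f a - f b| ≤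
      d * (m + 1) * #(subcube c m) * ∑ u ∈ subcube c m, gradLen f u := by
  set Q := subcube c m
  set G : Fin d → LatticePt d → ℝ := fun i v => ∑ r ∈ Icc (c i) (c i + m), gradLen f (update v i r)
  have sum_G (i : Fin d) : ∑ a ∈ Q, ∑ b ∈ Q, G i (hybrid i a b) =
      #Q * ((m + 1) * ∑ u ∈ Q, gradLen f u) := by
    have h := sum_sum_update (M := ℝ) (t := fun i => Icc (c i) (c i + m)) i (gradLen f)
    rw [show Q = Fintype.piFinset fun i => Icc (c i) (c i + m) from rfl, sum_sum_hybrid, h, nsmul_eq_mul, nsmul_eq_mul]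
    simp [add_sub_right_comm]
  calc ∑ a ∈ Q, ∑ b ∈ Q, |f a - f b|
      ≤ ∑ a ∈ Q, ∑ b ∈ Q, ∑ i : Fin d, G i (hybrid i a b) :=
        sum_le_sum fun a ha => sum_le_sum fun b hb => (abs_sub_le_sum_abs_sub_hybrid f a b).trans
          (sum_le_sum fun i _ => abs_sub_hybrid_succ_le f ha hb i)
    _ = ∑ i : Fin d, ∑ a ∈ Q, ∑ b ∈ Q, G i (hybrid i a b) := by
        rw [sum_congr rfl fun a _ => sum_comm, sum_comm]
    _ = d * (m + 1) * #Q * ∑ u ∈ Q, gradLen f u := by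
        simp only [sum_G, sum_const, card_univ, Fintype.card_fin, nsmul_eq_mul]
        ring

lemma sum_gradLen_le {n : ℕ} {p : ℝ} (hp : 1 ≤ p) (f : LatticePt d → ℝ)
    {Q : Finset (LatticePt d)} (hQ : Q ⊆ cube d n) :
    ∑ u ∈ Q, gradLen f u ≤ (#Q : ℝ) ^ (1 - p⁻¹) * lpGradNorm d n p f := by
  have holder := Real.inner_le_weight_mul_Lp_of_nonneg Q hp 1 (gradLen f) (fun _ => zero_le_one)
    (gradLen_nonneg f)
  simp only [Pi.one_apply, one_mul, sum_const, nsmul_one] at holder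
  refine holder.trans (mul_le_mul_of_nonneg_left ?_ (by positivity))
  rw [lpGradNorm, one_div]
  gcongr
  · exact sum_nonneg fun u _ => Real.rpow_nonneg (gradLen_nonneg f u) p
  · exact fun u _ _ => Real.rpow_nonneg (gradLen_nonneg f u) p

lemma lpGradNorm_nonneg (d n : ℕ) (p : ℝ) (f : LatticePt d → ℝ) : 0 ≤ lpGradNorm d n p f :=
  Real.rpow_nonneg (sum_nonneg fun u _ => Real.rpow_nonneg (gradLen_nonneg f u) p) _

theorem expect_expect_abs_sub_le {n : ℕ} {p : ℝ} (hp : 1 ≤ p) (f : LatticePt d → ℝ)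
    {c : LatticePt d} {m : ℕ} (hQ : subcube c m ⊆ cube d n) :
    𝔼 a ∈ subcube c m, 𝔼 b ∈ subcube c m, |f a - f b| ≤
      d * lpGradNorm d n p f * ((m : ℝ) + 1) ^ (1 - d / p) := by
  set Q := subcube c m
  set N := lpGradNorm d n p f
  have hm : (0 : ℝ) < m + 1 := by positivity
  have hcard : (#Q : ℝ) = ((m : ℝ) + 1) ^ d := by simp [Q, card_subcube]
  have hq : (0 : ℝ) < #Q := hcard ▸ by positivity
  have hpow : (#Q : ℝ) ^ (1 - p⁻¹) = #Q * ((m : ℝ) + 1) ^ (-(d / p)) := by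
    rw [Real.rpow_sub hq, Real.rpow_one, hcard, ← Real.rpow_natCast, ← Real.rpow_mul hm.le,
      Real.rpow_neg hm.le, div_eq_mul_inv, div_eq_mul_inv]
  have hexp : ((m : ℝ) + 1) * ((m : ℝ) + 1) ^ (-(d / p)) = ((m : ℝ) + 1) ^ (1 - d / p) := by
    rw [sub_eq_add_neg, Real.rpow_add hm, Real.rpow_one]
  calc 𝔼 a ∈ Q, 𝔼 b ∈ Q, |f a - f b| = (∑ a ∈ Q, ∑ b ∈ Q, |f a - f b|) / #Q ^ 2 := by
        simp only [expect_eq_sum_div_card, ← sum_div, div_div, sq]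
    _ ≤ d * (m + 1) * #Q * (#Q ^ (1 - p⁻¹) * N) / #Q ^ 2 := by
        gcongr
        exact (sum_sum_abs_sub_le f c m).trans
          (mul_le_mul_of_nonneg_left (sum_gradLen_le hp f hQ) (by positivity))
    _ = d * N * ((m : ℝ) + 1) ^ (1 - d / p) := by
        rw [hpow, ← hexp]
        field_simp

lemma abs_expect_sub_expect_le {ι : Type*} (f : ι → ℝ) {s t : Finset ι} (hs : s.Nonempty)
    (ht : t.Nonempty) : |𝔼 a ∈ s, f a - 𝔼 b ∈ t, f b| ≤ 𝔼 a ∈ s, 𝔼 b ∈ t, |f a - f b| := by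
  have h : 𝔼 a ∈ s, f a - 𝔼 b ∈ t, f b = 𝔼 a ∈ s, 𝔼 b ∈ t, (f a - f b) := by
    simp [expect_sub_distrib, expect_const ht, expect_const hs]
  rw [h]
  exact (abs_expect_le _ _).trans (expect_le_expect fun a _ => abs_expect_le _ _)

lemma expect_le_card_div_card_mul_expect {ι : Type*} {g : ι → ℝ} {s t : Finset ι} (hst : s ⊆ t)
    (hg : ∀ i ∈ t, 0 ≤ g i) : 𝔼 i ∈ s, g i ≤ (#t / #s : ℝ) * 𝔼 i ∈ t, g i := by
  rcases s.eq_empty_or_nonempty with rfl | hs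
  · simp
  have ht : (0 : ℝ) < #t := by exact_mod_cast (hs.mono hst).card_pos
  rw [expect_eq_sum_div_card, expect_eq_sum_div_card, div_mul_div_comm, mul_comm (#t : ℝ),
    mul_div_mul_right _ _ ht.ne']
  gcongr
  exact fun i hi _ => hg i hi

/-- The constant comes from `m / 2 + 1 ≤ 2 / 3 * (m + 1)` and `#(subcube c m) ≤ 2 ^ d * #(subcube c' (m / 2))`
for the halving step, summed as a geometric series. -/
theorem abs_sub_expect_subcube_le {S : Finset (LatticePt d)} {f : LatticePt d → ℝ} {A α : ℝ}
    (hα : 0 < α) (hA : 0 ≤ A)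
    (hosc : ∀ c m, subcube c m ⊆ S →
      𝔼 a ∈ subcube c m, 𝔼 b ∈ subcube c m, |f a - f b| ≤ A * ((m : ℝ) + 1) ^ α)
    (m : ℕ) {c x : LatticePt d} (hcS : subcube c m ⊆ S) (hx : x ∈ subcube c m) :
    |f x - 𝔼 a ∈ subcube c m, f a| ≤ 2 ^ d * A / (1 - (2 / 3) ^ α) * ((m : ℝ) + 1) ^ α := by
  set K := 2 ^ d * A / (1 - (2 / 3 : ℝ) ^ α)
  have hρ : (2 / 3 : ℝ) ^ α < 1 := Real.rpow_lt_one (by norm_num) (by norm_num) hα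
  have hK : 0 ≤ K := div_nonneg (by positivity) (by linarith)
  have hK_fixed : K * (2 / 3) ^ α + 2 ^ d * A = K := by
    have : 1 - (2 / 3 : ℝ) ^ α ≠ 0 := by linarith
    simp only [K]
    field_simp
    ring
  induction m using Nat.strong_induction_on generalizing c x with
  | _ m ih =>
  rcases Nat.eq_zero_or_pos m with rfl | hm
  · rw [subcube_zero] at hx ⊢
    simp [mem_singleton.1 hx, hK]
  obtain ⟨c', hsub, hx'⟩ := exists_subcube_half_mem hx
  have hhalf : ((m / 2 : ℕ) : ℝ) + 1 ≤ 2 / 3 * ((m : ℝ) + 1) := by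
    have : 3 * (m / 2) + 1 ≤ 2 * m := by omega
    have : 3 * ((m / 2 : ℕ) : ℝ) + 1 ≤ 2 * m := by exact_mod_cast this
    linarith
  have hdouble : (m : ℝ) + 1 ≤ 2 * (((m / 2 : ℕ) : ℝ) + 1) := by
    have : m ≤ 2 * (m / 2) + 1 := by omega
    have : (m : ℝ) ≤ 2 * ((m / 2 : ℕ) : ℝ) + 1 := by exact_mod_cast this
    linarith
  have hratio : (#(subcube c m) / #(subcube c' (m / 2)) : ℝ) ≤ 2 ^ d := by
    rw [div_le_iff₀ (by simp [card_subcube]; positivity), card_subcube, card_subcube]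
    push_cast
    rw [← mul_pow]
    gcongr
  have hjump : |𝔼 a ∈ subcube c' (m / 2), f a - 𝔼 a ∈ subcube c m, f a| ≤
      2 ^ d * A * ((m : ℝ) + 1) ^ α :=
    calc _ ≤ 𝔼 a ∈ subcube c' (m / 2), 𝔼 b ∈ subcube c m, |f a - f b| :=
          abs_expect_sub_expect_le f ⟨x, hx'⟩ ⟨x, hx⟩
      _ ≤ (#(subcube c m) / #(subcube c' (m / 2)) : ℝ) *
          𝔼 a ∈ subcube c m, 𝔼 b ∈ subcube c m, |f a - f b| :=
          expect_le_card_div_card_mul_expect hsub fun a _ =>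
            expect_nonneg fun b _ => abs_nonneg (f a - f b)
      _ ≤ 2 ^ d * (A * ((m : ℝ) + 1) ^ α) :=
          mul_le_mul hratio (hosc c m hcS) (expect_nonneg fun a _ =>
            expect_nonneg fun b _ => abs_nonneg (f a - f b)) (by positivity)
      _ = _ := by ring
  calc |f x - 𝔼 a ∈ subcube c m, f a|
      ≤ |f x - 𝔼 a ∈ subcube c' (m / 2), f a| +
        |𝔼 a ∈ subcube c' (m / 2), f a - 𝔼 a ∈ subcube c m, f a| := abs_sub_le _ _ _
    _ ≤ K * (((m / 2 : ℕ) : ℝ) + 1) ^ α + 2 ^ d * A * ((m : ℝ) + 1) ^ α :=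
        add_le_add (ih _ (Nat.div_lt_self hm one_lt_two) (hsub.trans hcS) hx') hjump
    _ ≤ K * ((2 / 3) ^ α * ((m : ℝ) + 1) ^ α) + 2 ^ d * A * ((m : ℝ) + 1) ^ α := by
        rw [← Real.mul_rpow (by norm_num) (by positivity)]
        gcongr
    _ = (K * (2 / 3) ^ α + 2 ^ d * A) * ((m : ℝ) + 1) ^ α := by ring
    _ = K * ((m : ℝ) + 1) ^ α := by rw [hK_fixed]

theorem abs_sub_expect_cube_le {n : ℕ} {p : ℝ} (hp : 1 ≤ p) (hα : 0 < 1 - (d : ℝ) / p)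
    (f : LatticePt d → ℝ) {z : LatticePt d} (hz : z ∈ cube d n) :
    |f z - 𝔼 a ∈ cube d n, f a| ≤ 2 ^ d * d / (1 - (2 / 3) ^ (1 - (d : ℝ) / p)) *
      lpGradNorm d n p f * ((n : ℝ) + 1) ^ (1 - (d : ℝ) / p) := by
  rw [cube_eq_subcube_zero] at hz ⊢
  refine (abs_sub_expect_subcube_le hα (mul_nonneg d.cast_nonneg (lpGradNorm_nonneg d n p f))
    (fun c m hQ => expect_expect_abs_sub_le hp f hQ) n (cube_eq_subcube_zero n).ge hz).trans_eq ?_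
  ring

end Cubes

/-- Discrete Morrey inequality for `p > d`. -/
theorem discrete_morrey (d : ℕ) (hd : 1 ≤ d) (p : ℝ) (hp : (d : ℝ) < p) :
    ∃ C : ℝ, ∀ n : ℕ, 1 ≤ n → ∀ f : LatticePt d → ℝ,
      ∀ x ∈ cube d n, ∀ y ∈ cube d n,
        |f x - f y| ≤ C * (n : ℝ) ^ (1 - (d : ℝ) / p) * lpGradNorm d n p f := by
  have hp1 : 1 ≤ p := le_trans (by exact_mod_cast hd) hp.le
  have hα : 0 < 1 - (d : ℝ) / p := sub_pos.2 ((div_lt_one (by linarith)).2 hp)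
  set α := 1 - (d : ℝ) / p
  set K := 2 ^ d * d / (1 - (2 / 3 : ℝ) ^ α)
  have hK : 0 ≤ K :=
    div_nonneg (by positivity) (sub_nonneg.2 (Real.rpow_le_one (by norm_num) (by norm_num) hα.le))
  refine ⟨2 * 2 ^ α * K, fun n hn f x hx y hy => ?_⟩
  set N := lpGradNorm d n p f
  have hn_succ : ((n : ℝ) + 1) ^ α ≤ 2 ^ α * (n : ℝ) ^ α := by
    rw [← Real.mul_rpow zero_le_two n.cast_nonneg]
    gcongr
    linarith [(Nat.one_le_cast (α := ℝ)).2 hn]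
  calc |f x - f y| ≤ |f x - 𝔼 a ∈ cube d n, f a| + |f y - 𝔼 a ∈ cube d n, f a| := by
        rw [abs_sub_comm (f y)]; exact abs_sub_le _ _ _
    _ ≤ 2 * (K * N * ((n : ℝ) + 1) ^ α) := by
        linarith [abs_sub_expect_cube_le hp1 hα f hx, abs_sub_expect_cube_le hp1 hα f hy]
    _ ≤ 2 * (K * N * (2 ^ α * (n : ℝ) ^ α)) := by
        have : 0 ≤ K * N := mul_nonneg hK (lpGradNorm_nonneg d n p f)
        gcongr
    _ = 2 * 2 ^ α * K * (n : ℝ) ^ α * N := by ring
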